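/- Let ν be Lebesgue measure on ℝ₊, let β : ℝ₊ → ℂ be ν-measurable with ‖β‖_∞ < ∞, and let {T_s}_{s≥0} be a semigroup of Dunford–Schwartz operators strongly continuous in L¹(Ω,μ). Then for every 1 ≤ p < ∞ and f ∈ Lᵖ(Ω,μ), the function s ↦ β(s)T_s(f), viewed as a map from (ℝ₊,ν) into the Banach space (Lᵖ(Ω,μ), ‖·‖_p), is Bochner ν-integrable on [0,t] for every t > 0; in particular the ergodic averages M_t(𝒯,β)(f) = (1/t)∫₀ᵗ β(s)T_s(f) ds are well-defined elements of Lᵖ(Ω,μ) for all f ∈ Lᵖ and t > 0. -/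

import Mathlib

open MeasureTheory Filter Set Topology
open scoped ENNReal NNReal

noncomputable section

/-- Almost uniform convergence (in Egorov's sense) of a family of functions along a filter:
for every `ε > 0` there is a measurable set `G` with `μ Gᶜ ≤ ε` on which the family converges
to `g` uniformly (in the essential sup norm). -/
def AUTendsto {Ω : Type*} [MeasurableSpace Ω] (μ : Measure Ω) {ι : Type*} (l : Filter ι)
    (F : ι → Ω → ℂ) (g : Ω → ℂ) : Prop :=
  ∀ ε : ℝ, 0 < ε → ∃ G : Set Ω, MeasurableSet G ∧ μ Gᶜ ≤ ENNReal.ofReal ε ∧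
    Tendsto (fun i => eLpNorm (G.indicator (g - F i)) ⊤ μ) l (𝓝 0)

/-- A semigroup `{T_s}_{s ≥ 0}` of Dunford–Schwartz operators, acting (via the canonical
extension) on `L¹ + L^∞`, which is strongly continuous in `L¹`.  The contraction property is
recorded for every exponent `1 ≤ p ≤ ∞`, as such an operator extends uniquely to a linear
contraction of every `Lᵖ`. -/
structure DSSemigroup {Ω : Type*} [MeasurableSpace Ω] (μ : Measure Ω) where
  T : ℝ → (Ω → ℂ) →ₗ[ℂ] (Ω → ℂ)
  aestronglyMeasurable : ∀ s : ℝ, 0 ≤ s → ∀ f : Ω → ℂ,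
    AEStronglyMeasurable f μ → AEStronglyMeasurable (T s f) μ
  map_zero : T 0 = LinearMap.id
  map_add : ∀ s t : ℝ, 0 ≤ s → 0 ≤ t → T (s + t) = (T s).comp (T t)
  contraction : ∀ p : ℝ≥0∞, 1 ≤ p → ∀ s : ℝ, 0 ≤ s → ∀ f : Ω → ℂ,
    eLpNorm (T s f) p μ ≤ eLpNorm f p μ
  strongContL1 : ∀ f : Ω → ℂ, MemLp f 1 μ → ∀ s₀ : ℝ, 0 ≤ s₀ →
    Tendsto (fun s => eLpNorm (T s f - T s₀ f) 1 μ) (𝓝[Ici 0] s₀) (𝓝 0)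

/-- Lyapunov-type interpolation: `‖h‖_p ≤ (‖h‖_1 * ‖h‖_∞^(p-1))^(1/p)`. -/
lemma interp_aux {α : Type*} [MeasurableSpace α] {μ : Measure α}
    {h : α → ℂ} (p : ℝ≥0∞) (hp1 : 1 ≤ p) (hpt : p ≠ ⊤)
    (hM : eLpNorm h ⊤ μ ≠ ⊤) :
    eLpNorm h p μ ≤ (eLpNorm h 1 μ * eLpNorm h ⊤ μ ^ (p.toReal - 1)) ^ (1 / p.toReal) := by
  have hp0 : p ≠ 0 := by positivity
  have hpt1 : 1 ≤ p.toReal := ENNReal.toReal_one ▸ ENNReal.toReal_mono hpt hp1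
  rw [eLpNorm_eq_lintegral_rpow_enorm_toReal hp0 hpt]
  gcongr ?_ ^ (1/p.toReal)
  have h1 : eLpNorm h 1 μ = ∫⁻ x, (‖h x‖₊ : ℝ≥0∞) ∂μ := by
    simp [eLpNorm, eLpNorm']; rfl
  have hMp : eLpNorm h ⊤ μ ^ (p.toReal - 1) ≠ ⊤ :=
    ENNReal.rpow_ne_top_of_nonneg (by linarith) hM
  rw [h1, ← lintegral_mul_const' _ _ hMp]
  refine lintegral_mono_ae ?_
  filter_upwards [ae_le_eLpNormEssSup (f := h) (μ := μ)] with x hx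
  calc (‖h x‖₊ : ℝ≥0∞) ^ p.toReal
      = (‖h x‖₊ : ℝ≥0∞) ^ (1:ℝ) * (‖h x‖₊ : ℝ≥0∞) ^ (p.toReal - 1) := by
        rw [← ENNReal.rpow_add_of_nonneg _ _ zero_le_one (by linarith)]; ring_nf
    _ ≤ (‖h x‖₊ : ℝ≥0∞) * eLpNorm h ⊤ μ ^ (p.toReal - 1) := by
        rw [ENNReal.rpow_one]
        exact mul_le_mul_right
          (ENNReal.rpow_le_rpow (by simpa [eLpNorm] using (show (‖h x‖₊ : ℝ≥0∞) ≤ eLpNormEssSup h μ from hx)) (by linarith)) _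

/-- Let `β : ℝ₊ → ℂ` be Lebesgue measurable with `‖β‖_∞ < ∞` and let
`{T_s}_{s≥0}` be a semigroup of Dunford–Schwartz operators, strongly continuous in `L¹`.
For `1 ≤ p < ∞` and `f ∈ Lᵖ(Ω,μ)`, the map `s ↦ β(s)T_s(f)`, viewed as a map from `(ℝ₊, ν)`
(Lebesgue measure) into the Banach space `Lᵖ(Ω,μ)` (here `A`, with `A s = β s • T_s f` in
`Lᵖ`), is Bochner `ν`-integrable on `[0,t]` for every `t > 0`; in particular the ergodic
averages `M_t(𝒯,β)(f) = (1/t)∫₀ᵗ β(s)T_s(f) ds` are well-defined elements of `Lᵖ(Ω,μ)`. -/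
theorem stmt2 {Ω : Type*} [MeasurableSpace Ω] (μ : Measure Ω) [SigmaFinite μ]
    (𝒯 : DSSemigroup μ) (β : ℝ → ℂ) (hβmeas : Measurable β)
    (hβbdd : eLpNorm β ⊤ (volume.restrict (Ici (0:ℝ))) < ⊤)
    (p : ℝ≥0∞) [Fact (1 ≤ p)] (hp : p ≠ ⊤)
    (f : Ω → ℂ) (hf : MemLp f p μ)
    (A : ℝ → Lp ℂ p μ)
    (hA : ∀ s : ℝ, 0 ≤ s → ⇑(A s) =ᵐ[μ] fun ω => β s * 𝒯.T s f ω)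
    (t : ℝ) (ht : 0 < t) :
    IntegrableOn A (Set.Ioc 0 t) volume := by
  have hp1 : (1:ℝ≥0∞) ≤ p := Fact.out
  have hp0 : p ≠ 0 := by positivity
  have hptR : 0 < p.toReal := ENNReal.toReal_pos hp0 hp
  have hT : ∀ s : ℝ, 0 ≤ s → MemLp (𝒯.T s f) p μ := fun s hs =>
    ⟨𝒯.aestronglyMeasurable s hs f hf.1, lt_of_le_of_lt (𝒯.contraction p hp1 s hs f) hf.2⟩
  -- Lp-continuity of the orbit s ↦ T_s f
  have key : ∀ s₀ : ℝ, 0 ≤ s₀ →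
      Tendsto (fun s => eLpNorm (𝒯.T s f - 𝒯.T s₀ f) p μ) (𝓝[Ici 0] s₀) (𝓝 0) := by
    intro s₀ hs₀
    rw [ENNReal.tendsto_nhds_zero]
    intro ε hε
    set δ : ℝ≥0∞ := min (ε/3) 1 with hδdef
    have hδ0 : δ ≠ 0 := by
      refine (lt_min (ENNReal.div_pos hε.ne' (by norm_num)) one_pos).ne'
    have hδε : δ + δ + δ ≤ ε := by
      calc δ + δ + δ ≤ ε/3 + ε/3 + ε/3 := by
            gcongr <;> exact min_le_left _ _
        _ ≤ ε := by
            have h3 : ε/3 + ε/3 + ε/3 = 3 * (ε/3) := by ring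
            rw [h3]; exact ENNReal.mul_div_le
    obtain ⟨g, hgf, hgp⟩ := hf.exists_simpleFunc_eLpNorm_sub_lt hp hδ0
    have hg1 : MemLp (⇑g) 1 μ :=
      (SimpleFunc.memLp_iff one_ne_zero ENNReal.one_ne_top).mpr
        ((SimpleFunc.memLp_iff hp0 hp).mp hgp)
    have hgtop : eLpNorm (⇑g) ⊤ μ ≠ ⊤ := (SimpleFunc.memLp_top g μ).2.ne
    set K : ℝ≥0∞ := 2 * eLpNorm (⇑g) ⊤ μ with hKdef
    have hK : K ≠ ⊤ := by
      simp only [hKdef, Ne, ENNReal.mul_eq_top]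
      push_neg
      exact ⟨fun _ => hgtop, fun h => absurd h (by norm_num)⟩
    have hmeasg : ∀ s : ℝ, 0 ≤ s → AEStronglyMeasurable (𝒯.T s g) μ :=
      fun s hs => 𝒯.aestronglyMeasurable s hs _ g.aestronglyMeasurable
    have hmidK : ∀ s : ℝ, 0 ≤ s → eLpNorm (𝒯.T s g - 𝒯.T s₀ g) ⊤ μ ≤ K := by
      intro s hs
      calc eLpNorm (𝒯.T s g - 𝒯.T s₀ g) ⊤ μ
          ≤ eLpNorm (𝒯.T s g) ⊤ μ + eLpNorm (𝒯.T s₀ g) ⊤ μ :=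
            eLpNorm_sub_le (hmeasg s hs) (hmeasg s₀ hs₀) le_top
        _ ≤ eLpNorm (⇑g) ⊤ μ + eLpNorm (⇑g) ⊤ μ := by
            gcongr
            · exact 𝒯.contraction ⊤ le_top s hs g
            · exact 𝒯.contraction ⊤ le_top s₀ hs₀ g
        _ = K := by rw [hKdef, two_mul]
    have hL1 := 𝒯.strongContL1 g hg1 s₀ hs₀
    have hmid : Tendsto (fun s => eLpNorm (𝒯.T s g - 𝒯.T s₀ g) p μ)
        (𝓝[Ici 0] s₀) (𝓝 0) := by
      have hKp : K ^ (p.toReal - 1) ≠ ⊤ := by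
        refine ENNReal.rpow_ne_top_of_nonneg ?_ hK
        have : 1 ≤ p.toReal := ENNReal.toReal_one ▸ ENNReal.toReal_mono hp hp1
        linarith
      have hb : Tendsto
          (fun s => (eLpNorm (𝒯.T s g - 𝒯.T s₀ g) 1 μ * K ^ (p.toReal - 1)) ^ (1/p.toReal))
          (𝓝[Ici 0] s₀) (𝓝 0) := by
        have h1 : Tendsto (fun s => eLpNorm (𝒯.T s g - 𝒯.T s₀ g) 1 μ * K ^ (p.toReal - 1))
            (𝓝[Ici 0] s₀) (𝓝 (0 * K ^ (p.toReal - 1))) :=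
          ENNReal.Tendsto.mul_const hL1 (Or.inr hKp)
        have h2 := ((ENNReal.continuous_rpow_const (y := 1/p.toReal)).tendsto
          (0 * K ^ (p.toReal - 1))).comp h1
        simpa [Function.comp_def, one_div,
          ENNReal.zero_rpow_of_pos (by positivity : (0:ℝ) < p.toReal⁻¹)] using h2
      refine tendsto_of_tendsto_of_tendsto_of_le_of_le' tendsto_const_nhds hb
        (Eventually.of_forall fun s => zero_le) ?_
      filter_upwards [eventually_mem_nhdsWithin] with s (hs : s ∈ Ici 0)
      have hMne : eLpNorm (𝒯.T s g - 𝒯.T s₀ g) ⊤ μ ≠ ⊤ :=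
        ne_top_of_le_ne_top hK (hmidK s hs)
      refine (interp_aux p hp1 hp hMne).trans ?_
      have h1R : 1 ≤ p.toReal := ENNReal.toReal_one ▸ ENNReal.toReal_mono hp hp1
      exact ENNReal.rpow_le_rpow
        (mul_le_mul_right (ENNReal.rpow_le_rpow (hmidK s hs) (by linarith)) _)
        (by positivity)
    have hmidδ : ∀ᶠ s in 𝓝[Ici 0] s₀, eLpNorm (𝒯.T s g - 𝒯.T s₀ g) p μ ≤ δ :=
      hmid.eventually_le_const (pos_iff_ne_zero.mpr hδ0)
    filter_upwards [hmidδ, eventually_mem_nhdsWithin] with s hsδ (hs : s ∈ Ici 0)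
    have hmf : AEStronglyMeasurable (𝒯.T s f) μ := (hT s hs).1
    have hmf0 : AEStronglyMeasurable (𝒯.T s₀ f) μ := (hT s₀ hs₀).1
    have hdecomp : 𝒯.T s f - 𝒯.T s₀ f =
        (𝒯.T s (f - ⇑g)) + ((𝒯.T s g - 𝒯.T s₀ g) + (𝒯.T s₀ (⇑g - f))) := by
      rw [map_sub, map_sub]
      funext x
      simp only [Pi.add_apply, Pi.sub_apply]
      ring
    have hc1 : eLpNorm (𝒯.T s (f - ⇑g)) p μ ≤ δ :=
      ((𝒯.contraction p hp1 s hs _).trans hgf.le)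
    have hc3 : eLpNorm (𝒯.T s₀ (⇑g - f)) p μ ≤ δ := by
      refine ((𝒯.contraction p hp1 s₀ hs₀ _).trans ?_)
      rw [show (⇑g - f) = -(f - ⇑g) by ring]
      rw [eLpNorm_neg]
      exact hgf.le
    have hm1 : AEStronglyMeasurable (𝒯.T s (f - ⇑g)) μ :=
      𝒯.aestronglyMeasurable s hs _ (hf.1.sub g.aestronglyMeasurable)
    have hm2 : AEStronglyMeasurable (𝒯.T s g - 𝒯.T s₀ g) μ :=
      (hmeasg s hs).sub (hmeasg s₀ hs₀)
    have hm3 : AEStronglyMeasurable (𝒯.T s₀ (⇑g - f)) μ :=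
      𝒯.aestronglyMeasurable s₀ hs₀ _ (g.aestronglyMeasurable.sub hf.1)
    calc eLpNorm (𝒯.T s f - 𝒯.T s₀ f) p μ
        = eLpNorm ((𝒯.T s (f - ⇑g)) + ((𝒯.T s g - 𝒯.T s₀ g) + (𝒯.T s₀ (⇑g - f)))) p μ := by
          rw [hdecomp]
      _ ≤ eLpNorm (𝒯.T s (f - ⇑g)) p μ +
            eLpNorm ((𝒯.T s g - 𝒯.T s₀ g) + (𝒯.T s₀ (⇑g - f))) p μ :=
          eLpNorm_add_le hm1 (hm2.add hm3) hp1
      _ ≤ eLpNorm (𝒯.T s (f - ⇑g)) p μ +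
            (eLpNorm (𝒯.T s g - 𝒯.T s₀ g) p μ + eLpNorm (𝒯.T s₀ (⇑g - f)) p μ) := by
          gcongr
          exact eLpNorm_add_le hm2 hm3 hp1
      _ ≤ δ + (δ + δ) := by gcongr
      _ = δ + δ + δ := by ring
      _ ≤ ε := hδε
  -- The orbit as an Lp-valued function
  set Tf : ℝ → Lp ℂ p μ := fun s => if hs : 0 ≤ s then (hT s hs).toLp _ else 0 with hTfdef
  have hTfcoe : ∀ s : ℝ, 0 ≤ s → ⇑(Tf s) =ᵐ[μ] 𝒯.T s f := by
    intro s hs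
    simp only [hTfdef, dif_pos hs]
    exact (hT s hs).coeFn_toLp
  have hTfcont : ContinuousOn Tf (Ici 0) := by
    intro s₀ hs₀
    rw [ContinuousWithinAt, tendsto_iff_dist_tendsto_zero]
    have h1 : Tendsto (fun s => (eLpNorm (𝒯.T s f - 𝒯.T s₀ f) p μ).toReal)
        (𝓝[Ici 0] s₀) (𝓝 0) := by
      have := (ENNReal.tendsto_toReal (a := 0) (by simp)).comp (key s₀ hs₀)
      simpa [Function.comp_def] using this
    refine h1.congr' ?_
    filter_upwards [eventually_mem_nhdsWithin] with s (hs : s ∈ Ici 0)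
    rw [Lp.dist_def]
    congr 1
    refine eLpNorm_congr_ae ?_
    filter_upwards [hTfcoe s hs, hTfcoe s₀ hs₀] with ω h1 h2
    simp [h1, h2]
  have hAeq : ∀ s ∈ Ioc (0:ℝ) t, A s = β s • Tf s := by
    intro s hs
    have hs0 : (0:ℝ) ≤ s := hs.1.le
    refine Lp.ext ?_
    refine (hA s hs0).trans ?_
    filter_upwards [Lp.coeFn_smul (β s) (Tf s), hTfcoe s hs0] with ω h1 h2
    rw [h1, Pi.smul_apply, h2, smul_eq_mul]
  have hmeasA : AEStronglyMeasurable A (volume.restrict (Ioc 0 t)) := by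
    have h1 : AEStronglyMeasurable (fun s => β s • Tf s) (volume.restrict (Ioc 0 t)) := by
      refine AEStronglyMeasurable.smul hβmeas.aestronglyMeasurable ?_
      exact ((hTfcont.mono (fun x hx => hx.1.le : Ioc (0:ℝ) t ⊆ Ici 0)).aestronglyMeasurable measurableSet_Ioc)
    refine h1.congr ?_
    rw [EventuallyEq, ae_restrict_iff' measurableSet_Ioc]
    exact Eventually.of_forall fun s hs => (hAeq s hs).symm
  refine ⟨hmeasA, ?_⟩
  have hβtop : eLpNormEssSup β (volume.restrict (Ici 0)) ≠ ⊤ := by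
    simpa [eLpNorm] using hβbdd.ne
  have hβae : ∀ᵐ s ∂(volume.restrict (Ioc (0:ℝ) t)),
      ‖β s‖ ≤ (eLpNormEssSup β (volume.restrict (Ici 0))).toReal := by
    have h0 : ∀ᵐ s ∂(volume.restrict (Ici (0:ℝ))),
        (‖β s‖₊ : ℝ≥0∞) ≤ eLpNormEssSup β (volume.restrict (Ici 0)) := ae_le_eLpNormEssSup
    refine (ae_restrict_of_ae_restrict_of_subset (fun x hx => hx.1.le : Ioc (0:ℝ) t ⊆ Ici 0) h0).mono fun s hs => ?_
    have := ENNReal.toReal_mono hβtop hs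
    simpa using this
  have hAeqae : ∀ᵐ s ∂(volume.restrict (Ioc (0:ℝ) t)), s ∈ Ioc (0:ℝ) t ∧ A s = β s • Tf s := by
    rw [ae_restrict_iff' measurableSet_Ioc]
    exact Eventually.of_forall fun s hs => ⟨hs, hAeq s hs⟩
  refine HasFiniteIntegral.mono' (g := fun _ =>
      (eLpNormEssSup β (volume.restrict (Ici 0))).toReal * (eLpNorm f p μ).toReal) ?_ ?_
  · refine ((integrableOn_const_iff (hC := enorm_ne_top)).mpr (Or.inr ?_)).hasFiniteIntegral
    exact measure_Ioc_lt_top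
  · filter_upwards [hβae, hAeqae] with s hβs hAs
    rw [hAs.2, norm_smul]
    have hTfle : ‖Tf s‖ ≤ (eLpNorm f p μ).toReal := by
      rw [Lp.norm_def]
      refine ENNReal.toReal_mono hf.2.ne ?_
      rw [eLpNorm_congr_ae (hTfcoe s hAs.1.1.le)]
      exact 𝒯.contraction p hp1 s hAs.1.1.le f
    exact mul_le_mul hβs hTfle (norm_nonneg _) ENNReal.toReal_nonneg
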